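/- arXiv:1906.10778 — 2 statements merged into one kernel-verified Lean document; each statement's English description precedes it below -/
import Mathlib

section
/- If w = (w₁, w₂) ∈ L²(G, ℝᵐ × ℝⁿ) satisfies the homogeneous system K₁₁(x)w₁(x) + K₁₂(x)w₂(x) + ∫_G [L₁₁(x,y)w₁(y) + L₁₂(x,y)w₂(y)] dy = 0 and K₂₁(x)w₁(x) + K₂₂(x)w₂(x) + ∫_G [L₂₁(x,y)w₁(y) + L₂₂(x,y)w₂(y)] dy = 0 for a.e. x ∈ G, then w₁ = 0 a.e. and w₂ = 0 a.e. -/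
/-
Pair the first equation with `w₁`, the second with `w₂`, and integrate. Writing `Q₁`, `Q₂` for the
quadratic forms of `(K₁₁, L₁₁)`, `(K₂₂, L₂₂)` and `B` for the bilinear form of `(K₁₂, L₁₂)`, this
gives `Q₁(w₁) + B(w₁, w₂) = 0` and, since the second row of the system carries the transposed
kernels, `B(w₁, w₂) + Q₂(w₂) = 0` after a Fubini swap. Hence `Q₁(w₁) = Q₂(w₂)`, while
`Q₁(w₁) ≥ 0 ≥ Q₂(w₂)` with equality only for zero arguments.
-/

open MeasureTheory Matrix

def JointlyPosDef {d k : ℕ} (G : Set (Fin d → ℝ))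
    (K : (Fin d → ℝ) → Matrix (Fin k) (Fin k) ℝ)
    (L : (Fin d → ℝ) → (Fin d → ℝ) → Matrix (Fin k) (Fin k) ℝ) : Prop :=
  ∀ w : (Fin d → ℝ) → Fin k → ℝ, MemLp w 2 (volume.restrict G) →
    ¬ (w =ᵐ[volume.restrict G] 0) →
    0 < (∫ x in G, w x ⬝ᵥ (K x *ᵥ w x)) + ∫ x in G, ∫ y in G, w x ⬝ᵥ (L x y *ᵥ w y)

def JointlyNegDef {d k : ℕ} (G : Set (Fin d → ℝ))
    (K : (Fin d → ℝ) → Matrix (Fin k) (Fin k) ℝ)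
    (L : (Fin d → ℝ) → (Fin d → ℝ) → Matrix (Fin k) (Fin k) ℝ) : Prop :=
  ∀ w : (Fin d → ℝ) → Fin k → ℝ, MemLp w 2 (volume.restrict G) →
    ¬ (w =ᵐ[volume.restrict G] 0) →
    (∫ x in G, w x ⬝ᵥ (K x *ᵥ w x)) + (∫ x in G, ∫ y in G, w x ⬝ᵥ (L x y *ᵥ w y)) < 0

open scoped ENNReal
open Function (uncurry)

section Kernels

variable {α : Type*} [MeasurableSpace α] {μ : Measure α} {ι κ κ' : Type*}

structure IsBoundedKernel (μ : Measure α) (K : α → Matrix ι κ ℝ) : Prop where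
  measurable : ∀ i j, Measurable fun x => K x i j
  ae_bounded : ∃ C, ∀ᵐ x ∂μ, ∀ i j, |K x i j| ≤ C

theorem IsBoundedKernel.transpose {K : α → Matrix ι κ ℝ} (hK : IsBoundedKernel μ K) :
    IsBoundedKernel μ fun x => (K x)ᵀ where
  measurable i j := hK.measurable j i
  ae_bounded :=
    let ⟨C, hC⟩ := hK.ae_bounded
    ⟨C, hC.mono fun _ hx i j => hx j i⟩

theorem IsBoundedKernel.transpose_swap [SFinite μ] {L : α → α → Matrix ι κ ℝ}
    (hL : IsBoundedKernel (μ.prod μ) (uncurry L)) :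
    IsBoundedKernel (μ.prod μ) (uncurry fun x y => (L y x)ᵀ) where
  measurable i j := (hL.measurable j i).comp measurable_swap
  ae_bounded :=
    let ⟨C, hC⟩ := hL.ae_bounded
    ⟨C, (Measure.measurePreserving_swap.quasiMeasurePreserving.ae hC).mono
      fun _ hp i j => hp j i⟩

theorem isBoundedKernel_restrict {s : Set α} (hs : MeasurableSet s) {K : α → Matrix ι κ ℝ}
    (hm : ∀ i j, Measurable fun x => K x i j) (hb : ∃ C, ∀ x ∈ s, ∀ i j, |K x i j| ≤ C) :
    IsBoundedKernel (μ.restrict s) K :=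
  let ⟨C, hC⟩ := hb
  ⟨hm, C, (ae_restrict_mem hs).mono hC⟩

theorem isBoundedKernel_prod_restrict [SFinite μ] {s : Set α} (hs : MeasurableSet s)
    {L : α → α → Matrix ι κ ℝ} (hm : ∀ i j, Measurable fun p : α × α => L p.1 p.2 i j)
    (hb : ∃ C, ∀ x ∈ s, ∀ y ∈ s, ∀ i j, |L x y i j| ≤ C) :
    IsBoundedKernel ((μ.restrict s).prod (μ.restrict s)) (uncurry L) := by
  obtain ⟨C, hC⟩ := hb
  refine ⟨hm, C, ?_⟩
  rw [Measure.prod_restrict]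
  exact (ae_restrict_mem (hs.prod hs)).mono fun p hp => hC p.1 hp.1 p.2 hp.2

variable [Fintype ι] [Fintype κ] [Fintype κ']

theorem IsBoundedKernel.memLp_mulVec {K : α → Matrix ι κ ℝ} (hK : IsBoundedKernel μ K)
    {p : ℝ≥0∞} {v : α → κ → ℝ} (hv : MemLp v p μ) : MemLp (fun x => K x *ᵥ v x) p μ := by
  obtain ⟨C, hC⟩ := hK.ae_bounded
  refine memLp_pi_iff.2 fun i => memLp_finsetSum _ fun j _ => ?_
  refine (hv.eval j).of_le_mul (c := C)
    ((hK.measurable i j).aestronglyMeasurable.mul (hv.eval j).1) ?_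
  filter_upwards [hC] with x hx
  rw [norm_mul, Real.norm_eq_abs]
  exact mul_le_mul_of_nonneg_right (hx i j) (norm_nonneg _)

theorem integrable_dotProduct {p q : ℝ≥0∞} [p.HolderTriple q 1] {u v : α → ι → ℝ}
    (hu : MemLp u p μ) (hv : MemLp v q μ) : Integrable (fun x => u x ⬝ᵥ v x) μ :=
  integrable_finsetSum _ fun i _ => (hu.eval i).integrable_mul (hv.eval i)

theorem dotProduct_integral (c : ι → ℝ) {V : α → ι → ℝ} (hV : Integrable V μ) :
    c ⬝ᵥ ∫ x, V x ∂μ = ∫ x, c ⬝ᵥ V x ∂μ := by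
  simp only [dotProduct, eval_integral hV.eval]
  rw [integral_finsetSum _ fun i _ => (hV.eval i).const_mul (c i)]
  simp only [integral_const_mul]

theorem IsBoundedKernel.integrable_dotProduct_mulVec_prod [SFinite μ]
    {L : α → α → Matrix ι κ ℝ} (hL : IsBoundedKernel (μ.prod μ) (uncurry L))
    {u : α → ι → ℝ} {v : α → κ → ℝ} (hu : Integrable u μ) (hv : Integrable v μ) :
    Integrable (fun p : α × α => u p.1 ⬝ᵥ (L p.1 p.2 *ᵥ v p.2)) (μ.prod μ) := by
  obtain ⟨C, hC⟩ := hL.ae_bounded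
  have hexpand : (fun p : α × α => u p.1 ⬝ᵥ (L p.1 p.2 *ᵥ v p.2))
      = fun p => ∑ i, ∑ j, L p.1 p.2 i j * (u p.1 i * v p.2 j) := by
    ext p
    simp only [dotProduct, mulVec, Finset.mul_sum]
    exact Finset.sum_congr rfl fun i _ => Finset.sum_congr rfl fun j _ => by ring
  rw [hexpand]
  refine integrable_finsetSum _ fun i _ => integrable_finsetSum _ fun j _ => ?_
  refine ((hu.eval i).mul_prod (hv.eval j)).bdd_mul (c := C)
    (hL.measurable i j).aestronglyMeasurable ?_
  filter_upwards [hC] with p hp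
  exact hp i j

theorem IsBoundedKernel.ae_integrable_mulVec [SFinite μ] {L : α → α → Matrix ι κ ℝ}
    (hL : IsBoundedKernel (μ.prod μ) (uncurry L)) {v : α → κ → ℝ} (hv : Integrable v μ) :
    ∀ᵐ x ∂μ, Integrable (fun y => L x y *ᵥ v y) μ := by
  obtain ⟨C, hC⟩ := hL.ae_bounded
  filter_upwards [Measure.ae_ae_of_ae_prod hC] with x hx
  have hLx : IsBoundedKernel μ (L x) :=
    ⟨fun i j => (hL.measurable i j).comp measurable_prodMk_left, C, hx⟩
  exact memLp_one_iff_integrable.1 (hLx.memLp_mulVec (memLp_one_iff_integrable.2 hv))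

variable (μ) in
noncomputable def kernelOp (K : α → Matrix ι κ ℝ) (L : α → α → Matrix ι κ ℝ)
    (v : α → κ → ℝ) (x : α) : ι → ℝ :=
  K x *ᵥ v x + ∫ y, L x y *ᵥ v y ∂μ

variable (μ) in
noncomputable def kernelForm (K : α → Matrix ι κ ℝ) (L : α → α → Matrix ι κ ℝ)
    (u : α → ι → ℝ) (v : α → κ → ℝ) : ℝ :=
  (∫ x, u x ⬝ᵥ (K x *ᵥ v x) ∂μ) + ∫ x, ∫ y, u x ⬝ᵥ (L x y *ᵥ v y) ∂μ ∂μ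

theorem kernelForm_eq_zero_of_ae_eq_zero (K : α → Matrix ι κ ℝ) (L : α → α → Matrix ι κ ℝ)
    {u : α → ι → ℝ} (v : α → κ → ℝ) (hu : u =ᵐ[μ] 0) : kernelForm μ K L u v = 0 := by
  have hu' : ∀ᵐ x ∂μ, u x = 0 := hu
  rw [kernelForm, integral_eq_zero_of_ae (hu'.mono fun x hx => by simp [hx]),
    integral_eq_zero_of_ae (hu'.mono fun x hx => by simp [hx]), add_zero]

theorem kernelForm_transpose [SFinite μ] (K : α → Matrix ι κ ℝ) {L : α → α → Matrix ι κ ℝ}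
    (hL : IsBoundedKernel (μ.prod μ) (uncurry L)) {u : α → ι → ℝ} {v : α → κ → ℝ}
    (hu : Integrable u μ) (hv : Integrable v μ) :
    kernelForm μ (fun x => (K x)ᵀ) (fun x y => (L y x)ᵀ) v u = kernelForm μ K L u v := by
  have hswap (a : ι → ℝ) (b : κ → ℝ) (M : Matrix ι κ ℝ) : b ⬝ᵥ (Mᵀ *ᵥ a) = a ⬝ᵥ (M *ᵥ b) := by
    rw [dotProduct_mulVec, vecMul_transpose, dotProduct_comm]
  simp only [kernelForm, hswap]
  congr 1
  exact (integral_integral_swap (hL.integrable_dotProduct_mulVec_prod hu hv)).symm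

section Pairing

variable [IsFiniteMeasure μ] {K : α → Matrix ι κ ℝ} {L : α → α → Matrix ι κ ℝ}
  {u : α → ι → ℝ} {v : α → κ → ℝ}

theorem dotProduct_kernelOp_ae_eq (hL : IsBoundedKernel (μ.prod μ) (uncurry L))
    (hv : Integrable v μ) :
    (fun x => u x ⬝ᵥ kernelOp μ K L v x)
      =ᵐ[μ] fun x => u x ⬝ᵥ (K x *ᵥ v x) + ∫ y, u x ⬝ᵥ (L x y *ᵥ v y) ∂μ := by
  filter_upwards [hL.ae_integrable_mulVec hv] with x hx
  rw [kernelOp, dotProduct_add, dotProduct_integral _ hx]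

theorem integrable_dotProduct_kernelOp (hK : IsBoundedKernel μ K)
    (hL : IsBoundedKernel (μ.prod μ) (uncurry L)) (hu : MemLp u 2 μ) (hv : MemLp v 2 μ) :
    Integrable (fun x => u x ⬝ᵥ kernelOp μ K L v x) μ := by
  refine Integrable.congr ?_ (dotProduct_kernelOp_ae_eq hL (hv.integrable one_le_two)).symm
  exact (integrable_dotProduct hu (hK.memLp_mulVec hv)).add
    (hL.integrable_dotProduct_mulVec_prod (hu.integrable one_le_two)
      (hv.integrable one_le_two)).integral_prod_left

theorem integral_dotProduct_kernelOp (hK : IsBoundedKernel μ K)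
    (hL : IsBoundedKernel (μ.prod μ) (uncurry L)) (hu : MemLp u 2 μ) (hv : MemLp v 2 μ) :
    ∫ x, u x ⬝ᵥ kernelOp μ K L v x ∂μ = kernelForm μ K L u v := by
  rw [integral_congr_ae (dotProduct_kernelOp_ae_eq hL (hv.integrable one_le_two)), kernelForm,
    integral_add (integrable_dotProduct hu (hK.memLp_mulVec hv))
      (hL.integrable_dotProduct_mulVec_prod (hu.integrable one_le_two)
        (hv.integrable one_le_two)).integral_prod_left]

theorem kernelForm_add_kernelForm_eq_zero {K' : α → Matrix ι κ' ℝ}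
    {L' : α → α → Matrix ι κ' ℝ} {v' : α → κ' → ℝ} (hK : IsBoundedKernel μ K)
    (hL : IsBoundedKernel (μ.prod μ) (uncurry L)) (hK' : IsBoundedKernel μ K')
    (hL' : IsBoundedKernel (μ.prod μ) (uncurry L')) (hu : MemLp u 2 μ) (hv : MemLp v 2 μ)
    (hv' : MemLp v' 2 μ)
    (h : ∀ᵐ x ∂μ, K x *ᵥ v x + K' x *ᵥ v' x + ∫ y, (L x y *ᵥ v y + L' x y *ᵥ v' y) ∂μ = 0) :
    kernelForm μ K L u v + kernelForm μ K' L' u v' = 0 := by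
  have hsum : ∀ᵐ x ∂μ, kernelOp μ K L v x + kernelOp μ K' L' v' x = 0 := by
    filter_upwards [h, hL.ae_integrable_mulVec (hv.integrable one_le_two),
      hL'.ae_integrable_mulVec (hv'.integrable one_le_two)] with x hx hLx hL'x
    rw [← hx, kernelOp, kernelOp, integral_add hLx hL'x]
    abel
  rw [← integral_dotProduct_kernelOp hK hL hu hv, ← integral_dotProduct_kernelOp hK' hL' hu hv',
    ← integral_add (integrable_dotProduct_kernelOp hK hL hu hv)
      (integrable_dotProduct_kernelOp hK' hL' hu hv')]
  refine integral_eq_zero_of_ae ?_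
  filter_upwards [hsum] with x hx
  rw [Pi.zero_apply, ← dotProduct_add, hx, dotProduct_zero]

end Pairing

end Kernels

section Definiteness

variable {d k : ℕ} {G : Set (Fin d → ℝ)} {K : (Fin d → ℝ) → Matrix (Fin k) (Fin k) ℝ}
  {L : (Fin d → ℝ) → (Fin d → ℝ) → Matrix (Fin k) (Fin k) ℝ} {w : (Fin d → ℝ) → Fin k → ℝ}

theorem JointlyPosDef.kernelForm_nonneg (h : JointlyPosDef G K L)
    (hw : MemLp w 2 (volume.restrict G)) : 0 ≤ kernelForm (volume.restrict G) K L w w := by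
  by_cases hw0 : w =ᵐ[volume.restrict G] 0
  · exact (kernelForm_eq_zero_of_ae_eq_zero K L w hw0).ge
  · exact (h w hw hw0).le

theorem JointlyPosDef.ae_eq_zero_of_kernelForm_nonpos (h : JointlyPosDef G K L)
    (hw : MemLp w 2 (volume.restrict G)) (hQ : kernelForm (volume.restrict G) K L w w ≤ 0) :
    w =ᵐ[volume.restrict G] 0 := by
  by_contra hw0
  exact (h w hw hw0).not_ge hQ

theorem JointlyNegDef.kernelForm_nonpos (h : JointlyNegDef G K L)
    (hw : MemLp w 2 (volume.restrict G)) : kernelForm (volume.restrict G) K L w w ≤ 0 := by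
  by_cases hw0 : w =ᵐ[volume.restrict G] 0
  · exact (kernelForm_eq_zero_of_ae_eq_zero K L w hw0).le
  · exact (h w hw hw0).le

theorem JointlyNegDef.ae_eq_zero_of_kernelForm_nonneg (h : JointlyNegDef G K L)
    (hw : MemLp w 2 (volume.restrict G)) (hQ : 0 ≤ kernelForm (volume.restrict G) K L w w) :
    w =ᵐ[volume.restrict G] 0 := by
  by_contra hw0
  exact (h w hw hw0).not_ge hQ

end Definiteness

theorem homogeneous_system_only_trivial_solution_general
    (d m n : ℕ)
    (G : Set (Fin d → ℝ)) (hGopen : IsOpen G) (hGbdd : Bornology.IsBounded G)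
    (K11 : (Fin d → ℝ) → Matrix (Fin m) (Fin m) ℝ)
    (K12 : (Fin d → ℝ) → Matrix (Fin m) (Fin n) ℝ)
    (K22 : (Fin d → ℝ) → Matrix (Fin n) (Fin n) ℝ)
    (L11 : (Fin d → ℝ) → (Fin d → ℝ) → Matrix (Fin m) (Fin m) ℝ)
    (L12 : (Fin d → ℝ) → (Fin d → ℝ) → Matrix (Fin m) (Fin n) ℝ)
    (L22 : (Fin d → ℝ) → (Fin d → ℝ) → Matrix (Fin n) (Fin n) ℝ)
    -- measurability of the kernels
    (hK11meas : ∀ i j, Measurable fun x => K11 x i j)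
    (hK12meas : ∀ i j, Measurable fun x => K12 x i j)
    (hK22meas : ∀ i j, Measurable fun x => K22 x i j)
    (hL11meas : ∀ i j, Measurable fun p : (Fin d → ℝ) × (Fin d → ℝ) => L11 p.1 p.2 i j)
    (hL12meas : ∀ i j, Measurable fun p : (Fin d → ℝ) × (Fin d → ℝ) => L12 p.1 p.2 i j)
    (hL22meas : ∀ i j, Measurable fun p : (Fin d → ℝ) × (Fin d → ℝ) => L22 p.1 p.2 i j)
    -- boundedness of the kernels
    (hK11bdd : ∃ C, ∀ x ∈ G, ∀ i j, |K11 x i j| ≤ C)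
    (hK12bdd : ∃ C, ∀ x ∈ G, ∀ i j, |K12 x i j| ≤ C)
    (hK22bdd : ∃ C, ∀ x ∈ G, ∀ i j, |K22 x i j| ≤ C)
    (hL11bdd : ∃ C, ∀ x ∈ G, ∀ y ∈ G, ∀ i j, |L11 x y i j| ≤ C)
    (hL12bdd : ∃ C, ∀ x ∈ G, ∀ y ∈ G, ∀ i j, |L12 x y i j| ≤ C)
    (hL22bdd : ∃ C, ∀ x ∈ G, ∀ y ∈ G, ∀ i j, |L22 x y i j| ≤ C)
    -- definiteness assumptions
    (hposdef : JointlyPosDef G K11 L11)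
    (hnegdef : JointlyNegDef G K22 L22)
    -- w = (w₁, w₂) ∈ L²(G, ℝᵐ × ℝⁿ) solving the homogeneous system a.e. on G
    (w1 : (Fin d → ℝ) → Fin m → ℝ) (w2 : (Fin d → ℝ) → Fin n → ℝ)
    (hw1 : MemLp w1 2 (volume.restrict G)) (hw2 : MemLp w2 2 (volume.restrict G))
    (hsys1 : ∀ᵐ x ∂(volume.restrict G),
      K11 x *ᵥ w1 x + K12 x *ᵥ w2 x
        + (∫ y in G, (L11 x y *ᵥ w1 y + L12 x y *ᵥ w2 y)) = 0)
    (hsys2 : ∀ᵐ x ∂(volume.restrict G),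
      (K12 x)ᵀ *ᵥ w1 x + K22 x *ᵥ w2 x
        + (∫ y in G, ((L12 y x)ᵀ *ᵥ w1 y + L22 x y *ᵥ w2 y)) = 0) :
    w1 =ᵐ[volume.restrict G] 0 ∧ w2 =ᵐ[volume.restrict G] 0 := by
  have hG : MeasurableSet G := hGopen.measurableSet
  have : IsFiniteMeasure (volume.restrict G) :=
    isFiniteMeasure_restrict.2 hGbdd.measure_lt_top.ne
  have hK11 := isBoundedKernel_restrict (μ := volume) hG hK11meas hK11bdd
  have hK12 := isBoundedKernel_restrict (μ := volume) hG hK12meas hK12bdd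
  have hK22 := isBoundedKernel_restrict (μ := volume) hG hK22meas hK22bdd
  have hL11 := isBoundedKernel_prod_restrict (μ := volume) hG hL11meas hL11bdd
  have hL12 := isBoundedKernel_prod_restrict (μ := volume) hG hL12meas hL12bdd
  have hL22 := isBoundedKernel_prod_restrict (μ := volume) hG hL22meas hL22bdd
  have h1 : kernelForm (volume.restrict G) K11 L11 w1 w1
      + kernelForm (volume.restrict G) K12 L12 w1 w2 = 0 :=
    kernelForm_add_kernelForm_eq_zero hK11 hL11 hK12 hL12 hw1 hw1 hw2 hsys1
  have h2 : kernelForm (volume.restrict G) K12 L12 w1 w2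
      + kernelForm (volume.restrict G) K22 L22 w2 w2 = 0 := by
    rw [← kernelForm_transpose K12 hL12 (hw1.integrable one_le_two)
      (hw2.integrable one_le_two)]
    exact kernelForm_add_kernelForm_eq_zero hK12.transpose hL12.transpose_swap hK22 hL22
      hw2 hw1 hw2 hsys2
  have hQ1 := hposdef.kernelForm_nonneg hw1
  have hQ2 := hnegdef.kernelForm_nonpos hw2
  exact ⟨hposdef.ae_eq_zero_of_kernelForm_nonpos hw1 (by linarith),
    hnegdef.ae_eq_zero_of_kernelForm_nonneg hw2 (by linarith)⟩

/-- If `w = (w₁, w₂) ∈ L²` solves the homogeneous system (2.14), then `w₁ = 0` a.e.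
and `w₂ = 0` a.e. -/
theorem homogeneous_system_only_trivial_solution
    (d m n : ℕ)
    (G : Set (Fin d → ℝ)) (hGopen : IsOpen G) (hGbdd : Bornology.IsBounded G)
    (K11 : (Fin d → ℝ) → Matrix (Fin m) (Fin m) ℝ)
    (K12 : (Fin d → ℝ) → Matrix (Fin m) (Fin n) ℝ)
    (K22 : (Fin d → ℝ) → Matrix (Fin n) (Fin n) ℝ)
    (L11 : (Fin d → ℝ) → (Fin d → ℝ) → Matrix (Fin m) (Fin m) ℝ)
    (L12 : (Fin d → ℝ) → (Fin d → ℝ) → Matrix (Fin m) (Fin n) ℝ)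
    (L22 : (Fin d → ℝ) → (Fin d → ℝ) → Matrix (Fin n) (Fin n) ℝ)
    -- measurability of the kernels
    (hK11meas : ∀ i j, Measurable fun x => K11 x i j)
    (hK12meas : ∀ i j, Measurable fun x => K12 x i j)
    (hK22meas : ∀ i j, Measurable fun x => K22 x i j)
    (hL11meas : ∀ i j, Measurable fun p : (Fin d → ℝ) × (Fin d → ℝ) => L11 p.1 p.2 i j)
    (hL12meas : ∀ i j, Measurable fun p : (Fin d → ℝ) × (Fin d → ℝ) => L12 p.1 p.2 i j)
    (hL22meas : ∀ i j, Measurable fun p : (Fin d → ℝ) × (Fin d → ℝ) => L22 p.1 p.2 i j)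
    -- boundedness of the kernels
    (hK11bdd : ∃ C, ∀ x ∈ G, ∀ i j, |K11 x i j| ≤ C)
    (hK12bdd : ∃ C, ∀ x ∈ G, ∀ i j, |K12 x i j| ≤ C)
    (hK22bdd : ∃ C, ∀ x ∈ G, ∀ i j, |K22 x i j| ≤ C)
    (hL11bdd : ∃ C, ∀ x ∈ G, ∀ y ∈ G, ∀ i j, |L11 x y i j| ≤ C)
    (hL12bdd : ∃ C, ∀ x ∈ G, ∀ y ∈ G, ∀ i j, |L12 x y i j| ≤ C)
    (hL22bdd : ∃ C, ∀ x ∈ G, ∀ y ∈ G, ∀ i j, |L22 x y i j| ≤ C)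
    -- symmetry of the kernels
    (hK11sym : ∀ x ∈ G, (K11 x)ᵀ = K11 x)
    (hK22sym : ∀ x ∈ G, (K22 x)ᵀ = K22 x)
    (hL11sym : ∀ x ∈ G, ∀ y ∈ G, (L11 x y)ᵀ = L11 y x)
    (hL22sym : ∀ x ∈ G, ∀ y ∈ G, (L22 x y)ᵀ = L22 y x)
    -- definiteness assumptions
    (hposdef : JointlyPosDef G K11 L11)
    (hnegdef : JointlyNegDef G K22 L22)
    -- w = (w₁, w₂) ∈ L²(G, ℝᵐ × ℝⁿ) solving the homogeneous system a.e. on G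
    (w1 : (Fin d → ℝ) → Fin m → ℝ) (w2 : (Fin d → ℝ) → Fin n → ℝ)
    (hw1 : MemLp w1 2 (volume.restrict G)) (hw2 : MemLp w2 2 (volume.restrict G))
    (hsys1 : ∀ᵐ x ∂(volume.restrict G),
      K11 x *ᵥ w1 x + K12 x *ᵥ w2 x
        + (∫ y in G, (L11 x y *ᵥ w1 y + L12 x y *ᵥ w2 y)) = 0)
    (hsys2 : ∀ᵐ x ∂(volume.restrict G),
      (K12 x)ᵀ *ᵥ w1 x + K22 x *ᵥ w2 x
        + (∫ y in G, ((L12 y x)ᵀ *ᵥ w1 y + L22 x y *ᵥ w2 y)) = 0) :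
    w1 =ᵐ[volume.restrict G] 0 ∧ w2 =ᵐ[volume.restrict G] 0 :=
  homogeneous_system_only_trivial_solution_general d m n G hGopen hGbdd K11 K12 K22 L11 L12 L22
    hK11meas hK12meas hK22meas hL11meas hL12meas hL22meas hK11bdd hK12bdd hK22bdd hL11bdd hL12bdd
    hL22bdd hposdef hnegdef w1 w2 hw1 hw2 hsys1 hsys2
end

section
/- The kernel L₁₁(t,s) := B₁(t₁,t)ᵀP₀B₁(t₁,s) + ∫_{max(t,s)}^{t₁} B₁(σ,t)ᵀP₁(σ)B₁(σ,s) dσ + ∫_t^{t₁}∫_s^{t₁} B₁(τ,t)ᵀP₂(τ,σ)B₁(σ,s) dσ dτ + Q₂(t,s) satisfies ∫_{t₀}^{t₁}∫_{t₀}^{t₁} w(t)ᵀL₁₁(t,s)w(s) ds dt ≥ 0 for every w ∈ L²(t₀,t₁;ℝᵐ). -/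
/-!
Let `V(σ,t) = B₁(σ,t)` on the triangle `t₀ ≤ t ≤ σ ≤ t₁` and `0` elsewhere, and let
`z(σ) = ∫ V(σ,t) w(t) dt = ∫_{t₀}^{σ} B₁(σ,t) w(t) dt`. Apart from `Q₂`, each part of `L₁₁` is a
Gram kernel `∫ V(x,t)ᵀ P(x) V(x,s) dρ(x)`: for `P₀` with `ρ` the Dirac mass at `t₁`, for `P₁` with
`ρ` Lebesgue measure on `(t₀,t₁]`, and for `P₂` with `ρ` its square (with `V(τ,t)` on the left and
`V(σ,s)` on the right). By Fubini the quadratic form of a Gram kernel is `∫ z(x)ᵀ P(x) z(x) dρ(x)`,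
so `∫∫ wᵀ L₁₁ w = z(t₁)ᵀ P₀ z(t₁) + ∫ zᵀ P₁ z + ∫∫ zᵀ P₂ z + ∫∫ wᵀ Q₂ w`, a sum of four
nonnegative terms.
-/

open MeasureTheory Matrix intervalIntegral

attribute [local instance] Matrix.normedAddCommGroup Matrix.normedSpace

open Function (uncurry)

/-- The local norm on matrices induces a topology that agrees with `Matrix.topologicalSpace` only
up to unfolding, so instance search cannot find this instance by itself; `Integrable` needs it
for matrix-valued maps. -/
instance Matrix.instContinuousENorm {ι κ : Type*} [Fintype ι] [Fintype κ] :
    ContinuousENorm (Matrix ι κ ℝ) :=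
  SeminormedAddGroup.toContinuousENorm

section MatrixNorm

variable {ι κ ο : Type*} [Fintype ι] [Fintype κ]

lemma abs_dotProduct_le_card_mul (u v : ι → ℝ) :
    |u ⬝ᵥ v| ≤ Fintype.card ι * (‖u‖ * ‖v‖) := by
  calc |u ⬝ᵥ v| ≤ ∑ i, |u i * v i| := Finset.abs_sum_le_sum_abs _ _
    _ ≤ ∑ _i : ι, ‖u‖ * ‖v‖ := Finset.sum_le_sum fun i _ => by
        rw [abs_mul]
        exact mul_le_mul (norm_le_pi_norm u i) (norm_le_pi_norm v i) (abs_nonneg _) (norm_nonneg _)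
    _ = Fintype.card ι * (‖u‖ * ‖v‖) := by simp

lemma Matrix.norm_mulVec_le_card_mul (A : Matrix ι κ ℝ) (v : κ → ℝ) :
    ‖A *ᵥ v‖ ≤ Fintype.card κ * (‖A‖ * ‖v‖) :=
  (pi_norm_le_iff_of_nonneg (by positivity)).2 fun i => (abs_dotProduct_le_card_mul _ _).trans <| by
    gcongr; exact norm_le_pi_norm (A : ι → κ → ℝ) i

lemma Matrix.norm_mulVec_le_of_norm_le {A : Matrix ι κ ℝ} {C : ℝ} (hA : ‖A‖ ≤ C) (v : κ → ℝ) :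
    ‖A *ᵥ v‖ ≤ Fintype.card κ * C * ‖v‖ := by
  rw [mul_assoc]; exact (norm_mulVec_le_card_mul _ _).trans (by gcongr)

lemma Matrix.norm_mul_le_card_mul [Fintype ο] (A : Matrix ι κ ℝ) (B : Matrix κ ο ℝ) :
    ‖A * B‖ ≤ Fintype.card κ * (‖A‖ * ‖B‖) := by
  refine (norm_le_iff (by positivity)).2 fun i j => ?_
  rw [mul_apply', Real.norm_eq_abs]
  refine (abs_dotProduct_le_card_mul _ _).trans ?_
  gcongr
  · exact norm_le_pi_norm (A : ι → κ → ℝ) i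
  · exact (pi_norm_le_iff_of_nonneg (norm_nonneg _)).2 fun k => norm_entry_le_entrywise_sup_norm B

lemma Matrix.norm_transpose_mul_mul_le [Fintype ο] (A : Matrix ι κ ℝ) (P : Matrix ι ι ℝ)
    (B : Matrix ι ο ℝ) :
    ‖Aᵀ * P * B‖ ≤ Fintype.card ι * (Fintype.card ι * (‖A‖ * ‖P‖) * ‖B‖) :=
  calc ‖Aᵀ * P * B‖ ≤ Fintype.card ι * (‖Aᵀ * P‖ * ‖B‖) := norm_mul_le_card_mul _ _
    _ ≤ Fintype.card ι * (Fintype.card ι * (‖A‖ * ‖P‖) * ‖B‖) := by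
        rw [← norm_transpose A]; gcongr; exact norm_mul_le_card_mul _ _

lemma Matrix.norm_le_max_of_abs_le {A : Matrix ι κ ℝ} {M : ℝ} (h : ∀ i j, |A i j| ≤ M) :
    ‖A‖ ≤ max M 0 :=
  (norm_le_iff (le_max_right _ _)).2 fun i j => (h i j).trans (le_max_left _ _)

lemma Matrix.dotProduct_transpose_mul_mul_mulVec [Fintype ο] (u : κ → ℝ) (A : Matrix ι κ ℝ)
    (P : Matrix ι ι ℝ) (B : Matrix ι ο ℝ) (v : ο → ℝ) :
    u ⬝ᵥ ((Aᵀ * P * B) *ᵥ v) = (A *ᵥ u) ⬝ᵥ (P *ᵥ (B *ᵥ v)) := by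
  rw [← mulVec_mulVec, ← mulVec_mulVec, dotProduct_mulVec, vecMul_transpose]

end MatrixNorm

section Measurability

variable {α : Type*} [MeasurableSpace α] {μ : Measure α} {ι κ ο : Type*} [Fintype ι]

lemma Matrix.stronglyMeasurable_of_measurable_apply [Fintype κ] {f : α → Matrix ι κ ℝ}
    (hf : ∀ i j, Measurable fun x => f x i j) : StronglyMeasurable f := by
  classical
  have hsum : f = fun x => ∑ i, ∑ j, f x i j • single i j (1 : ℝ) := by
    ext x a b
    simp [Matrix.sum_apply, single_apply, ite_and]
  rw [hsum]
  exact Finset.stronglyMeasurable_fun_sum _ fun i _ => Finset.stronglyMeasurable_fun_sum _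
    fun j _ => (hf i j).stronglyMeasurable.smul_const _

lemma MeasureTheory.AEStronglyMeasurable.transpose_mul_mul {A : α → Matrix ι κ ℝ}
    {P : α → Matrix ι ι ℝ} {B : α → Matrix ι ο ℝ} (hA : AEStronglyMeasurable A μ)
    (hP : AEStronglyMeasurable P μ) (hB : AEStronglyMeasurable B μ) :
    AEStronglyMeasurable (fun a => (A a)ᵀ * P a * B a) μ := by
  have hcont : Continuous fun q : (Matrix ι κ ℝ × Matrix ι ι ℝ) × Matrix ι ο ℝ =>
      q.1.1ᵀ * q.1.2 * q.2 := by fun_prop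
  exact (hcont.comp_aestronglyMeasurable ((hA.prodMk hP).prodMk hB) :)

end Measurability

section Integral

variable {α β : Type*} [MeasurableSpace α] [MeasurableSpace β] {μ : Measure α} {ν : Measure β}
  {ι κ ο : Type*} [Fintype ι] [Fintype κ]

lemma integral_dotProduct (u : ι → ℝ) {f : α → ι → ℝ} (hf : Integrable f μ) :
    ∫ a, u ⬝ᵥ f a ∂μ = u ⬝ᵥ ∫ a, f a ∂μ :=
  (LinearMap.toContinuousLinearMap (dotProductBilin ℝ ℝ u)).integral_comp_comm hf

lemma integral_dotProduct_mulVec (u : ι → ℝ) (v : κ → ℝ) {f : α → Matrix ι κ ℝ}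
    (hf : Integrable f μ) :
    ∫ a, u ⬝ᵥ (f a *ᵥ v) ∂μ = u ⬝ᵥ ((∫ a, f a ∂μ) *ᵥ v) := by
  let L : Matrix ι κ ℝ →ₗ[ℝ] ℝ :=
    { toFun := fun A => u ⬝ᵥ (A *ᵥ v)
      map_add' := fun A B => by simp [add_mulVec, dotProduct_add]
      map_smul' := fun c A => by simp [smul_mulVec, dotProduct_smul] }
  exact (LinearMap.toContinuousLinearMap L).integral_comp_comm hf

lemma integral_integral_dotProduct_mulVec (A : Matrix ι κ ℝ) {f : α → ι → ℝ} {g : β → κ → ℝ}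
    (hf : Integrable f μ) (hg : Integrable g ν) :
    ∫ a, ∫ b, f a ⬝ᵥ (A *ᵥ g b) ∂ν ∂μ = (∫ a, f a ∂μ) ⬝ᵥ (A *ᵥ ∫ b, g b ∂ν) := by
  simp_rw [dotProduct_mulVec _ A, integral_dotProduct _ hg, ← dotProduct_mulVec,
    dotProduct_comm (f _), integral_dotProduct _ hf, dotProduct_comm]

lemma integrable_dotProduct_mulVec_of_norm_le {u : α → ι → ℝ} {A : α → Matrix ι κ ℝ}
    {v : α → κ → ℝ} (hu : AEStronglyMeasurable u μ) (hA : AEStronglyMeasurable A μ)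
    (hv : AEStronglyMeasurable v μ) {C : ℝ} (hAC : ∀ᵐ a ∂μ, ‖A a‖ ≤ C)
    (huv : Integrable (fun a => ‖u a‖ * ‖v a‖) μ) :
    Integrable (fun a => u a ⬝ᵥ (A a *ᵥ v a)) μ := by
  have hcont : Continuous fun q : (ι → ℝ) × Matrix ι κ ℝ × (κ → ℝ) => q.1 ⬝ᵥ (q.2.1 *ᵥ q.2.2) := by
    fun_prop
  refine (huv.const_mul (Fintype.card ι * (Fintype.card κ * C))).mono'
    (hcont.comp_aestronglyMeasurable (hu.prodMk (hA.prodMk hv))) ?_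
  filter_upwards [hAC] with a ha
  rw [Real.norm_eq_abs]
  calc |u a ⬝ᵥ (A a *ᵥ v a)| ≤ Fintype.card ι * (‖u a‖ * ‖A a *ᵥ v a‖) :=
        abs_dotProduct_le_card_mul _ _
    _ ≤ Fintype.card ι * (‖u a‖ * (Fintype.card κ * C * ‖v a‖)) := by
        gcongr; exact norm_mulVec_le_of_norm_le ha _
    _ = Fintype.card ι * (Fintype.card κ * C) * (‖u a‖ * ‖v a‖) := by ring

lemma integrable_mulVec_of_norm_le {A : α → Matrix ι κ ℝ} {v : α → κ → ℝ}
    (hA : AEStronglyMeasurable A μ) {C : ℝ} (hAC : ∀ᵐ a ∂μ, ‖A a‖ ≤ C) (hv : Integrable v μ) :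
    Integrable (fun a => A a *ᵥ v a) μ := by
  have hcont : Continuous fun q : Matrix ι κ ℝ × (κ → ℝ) => q.1 *ᵥ q.2 := by fun_prop
  refine (hv.norm.const_mul (Fintype.card κ * C)).mono'
    (hcont.comp_aestronglyMeasurable (hA.prodMk hv.1)) ?_
  filter_upwards [hAC] with a ha
  exact norm_mulVec_le_of_norm_le ha _

lemma integrable_transpose_mul_mul [Fintype ο] [IsFiniteMeasure μ] {A : α → Matrix ι κ ℝ}
    {P : α → Matrix ι ι ℝ} {B : α → Matrix ι ο ℝ} (hA : AEStronglyMeasurable A μ)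
    (hP : AEStronglyMeasurable P μ) (hB : AEStronglyMeasurable B μ) {CA CP CB : ℝ}
    (hAC : ∀ᵐ a ∂μ, ‖A a‖ ≤ CA) (hPC : ∀ᵐ a ∂μ, ‖P a‖ ≤ CP) (hBC : ∀ᵐ a ∂μ, ‖B a‖ ≤ CB) :
    Integrable (fun a => (A a)ᵀ * P a * B a) μ := by
  refine .of_bound (hA.transpose_mul_mul hP hB)
    (Fintype.card ι * (Fintype.card ι * (CA * CP) * CB)) ?_
  filter_upwards [hAC, hPC, hBC] with a hA hP hB
  have hCA : 0 ≤ CA := (norm_nonneg _).trans hA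
  have hCP : 0 ≤ CP := (norm_nonneg _).trans hP
  exact (norm_transpose_mul_mul_le _ _ _).trans (by gcongr)

end Integral

lemma integral_integral_integral_swap {α β γ E : Type*} [MeasurableSpace α] [MeasurableSpace β]
    [MeasurableSpace γ] {μ : Measure α} {ν : Measure β} {ρ : Measure γ} [SFinite μ] [SFinite ν]
    [SFinite ρ] [NormedAddCommGroup E] [NormedSpace ℝ E] {F : α → β → γ → E}
    (hF : Integrable (fun r : (α × β) × γ => F r.1.1 r.1.2 r.2) ((μ.prod ν).prod ρ)) :
    ∫ a, ∫ b, ∫ c, F a b c ∂ρ ∂ν ∂μ = ∫ c, ∫ a, ∫ b, F a b c ∂ν ∂μ ∂ρ := by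
  calc ∫ a, ∫ b, ∫ c, F a b c ∂ρ ∂ν ∂μ = ∫ q, ∫ c, F q.1 q.2 c ∂ρ ∂μ.prod ν :=
        (integral_prod _ hF.integral_prod_left).symm
    _ = ∫ c, ∫ q, F q.1 q.2 c ∂μ.prod ν ∂ρ := integral_integral_swap hF
    _ = ∫ c, ∫ a, ∫ b, F a b c ∂ν ∂μ ∂ρ :=
        integral_congr_ae <| hF.prod_left_ae.mono fun c hc => integral_prod _ hc

section KernelQuadForm

variable {α γ : Type*} [MeasurableSpace α] [MeasurableSpace γ] {μ : Measure α} {ρ : Measure γ}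
  {ι κ : Type*} [Fintype ι] [Fintype κ]

noncomputable def kernelQuadForm (μ : Measure α) (L : α → α → Matrix κ κ ℝ) (w : α → κ → ℝ) :
    ℝ :=
  ∫ t, ∫ s, w t ⬝ᵥ (L t s *ᵥ w s) ∂μ ∂μ

def kernelQuadIntegrand (L : α → α → Matrix κ κ ℝ) (w : α → κ → ℝ) (q : α × α) : ℝ :=
  w q.1 ⬝ᵥ (L q.1 q.2 *ᵥ w q.2)

noncomputable def gramKernel (ρ : Measure γ) (K : γ → α → Matrix ι κ ℝ) (P : γ → Matrix ι ι ℝ)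
    (K' : γ → α → Matrix ι κ ℝ) (t s : α) : Matrix κ κ ℝ :=
  ∫ x, (K x t)ᵀ * P x * K' x s ∂ρ

noncomputable def integralOperator (μ : Measure α) (K : γ → α → Matrix ι κ ℝ) (w : α → κ → ℝ)
    (x : γ) : ι → ℝ :=
  ∫ t, K x t *ᵥ w t ∂μ

lemma kernelQuadForm_restrict_congr {S : Set α} (hS : MeasurableSet S)
    {L L' : α → α → Matrix κ κ ℝ} (w : α → κ → ℝ) (h : ∀ t ∈ S, ∀ s ∈ S, L t s = L' t s) :
    kernelQuadForm (μ.restrict S) L w = kernelQuadForm (μ.restrict S) L' w :=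
  setIntegral_congr_fun hS fun t ht => setIntegral_congr_fun hS fun s hs => by rw [h t ht s hs]

lemma MeasureTheory.Integrable.kernelQuadIntegrand_add {L L' : α → α → Matrix κ κ ℝ}
    {w : α → κ → ℝ} (hL : Integrable (kernelQuadIntegrand L w) (μ.prod μ))
    (hL' : Integrable (kernelQuadIntegrand L' w) (μ.prod μ)) :
    Integrable (kernelQuadIntegrand (fun t s => L t s + L' t s) w) (μ.prod μ) := by
  have hsum : kernelQuadIntegrand (fun t s => L t s + L' t s) w
      = kernelQuadIntegrand L w + kernelQuadIntegrand L' w := by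
    ext q; simp [kernelQuadIntegrand, add_mulVec, dotProduct_add]
  exact hsum ▸ hL.add hL'

lemma kernelQuadForm_add [SFinite μ] {L L' : α → α → Matrix κ κ ℝ} {w : α → κ → ℝ}
    (hL : Integrable (kernelQuadIntegrand L w) (μ.prod μ))
    (hL' : Integrable (kernelQuadIntegrand L' w) (μ.prod μ)) :
    kernelQuadForm μ (fun t s => L t s + L' t s) w
      = kernelQuadForm μ L w + kernelQuadForm μ L' w := by
  simp only [kernelQuadForm, add_mulVec, dotProduct_add]
  exact integral_integral_add hL hL'

lemma integrable_kernelQuadIntegrand_of_norm_le {L : α → α → Matrix κ κ ℝ} {w : α → κ → ℝ}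
    (hL : AEStronglyMeasurable (uncurry L) (μ.prod μ)) {C : ℝ}
    (hLC : ∀ᵐ q ∂μ.prod μ, ‖L q.1 q.2‖ ≤ C) (hw : Integrable w μ) :
    Integrable (kernelQuadIntegrand L w) (μ.prod μ) :=
  integrable_dotProduct_mulVec_of_norm_le hw.1.comp_fst hL hw.1.comp_snd hLC
    (hw.norm.mul_prod hw.norm)

variable [IsFiniteMeasure ρ] {K K' : γ → α → Matrix ι κ ℝ} {P : γ → Matrix ι ι ℝ}
  {w : α → κ → ℝ} {C CP : ℝ}

lemma memLp_integralOperator [SFinite μ] (hK : StronglyMeasurable (uncurry K))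
    (hKC : ∀ x t, ‖K x t‖ ≤ C) (hw : Integrable w μ) (p : ENNReal) :
    MemLp (integralOperator μ K w) p ρ := by
  have hcont : Continuous fun q : Matrix ι κ ℝ × (κ → ℝ) => q.1 *ᵥ q.2 := by fun_prop
  refine .of_bound (hcont.comp_aestronglyMeasurable
      (hK.aestronglyMeasurable.prodMk hw.1.comp_snd)).integral_prod_right'
    (Fintype.card κ * C * ∫ t, ‖w t‖ ∂μ) (.of_forall fun x => ?_)
  rw [← MeasureTheory.integral_const_mul]
  exact norm_integral_le_of_norm_le (hw.norm.const_mul _)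
    (.of_forall fun t => norm_mulVec_le_of_norm_le (hKC x t) _)

lemma kernelQuadIntegrand_gramKernel (hK : StronglyMeasurable (uncurry K))
    (hK' : StronglyMeasurable (uncurry K')) (hP : AEStronglyMeasurable P ρ)
    (hKC : ∀ x t, ‖K x t‖ ≤ C) (hK'C : ∀ x t, ‖K' x t‖ ≤ C) (hPC : ∀ᵐ x ∂ρ, ‖P x‖ ≤ CP)
    (q : α × α) :
    kernelQuadIntegrand (gramKernel ρ K P K') w q
      = ∫ x, w q.1 ⬝ᵥ (((K x q.1)ᵀ * P x * K' x q.2) *ᵥ w q.2) ∂ρ := by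
  refine (integral_dotProduct_mulVec _ _ (integrable_transpose_mul_mul ?_ hP ?_
    (.of_forall fun x => hKC x q.1) hPC (.of_forall fun x => hK'C x q.2))).symm
  · exact (hK.comp_measurable (measurable_id.prodMk measurable_const)).aestronglyMeasurable
  · exact (hK'.comp_measurable (measurable_id.prodMk measurable_const)).aestronglyMeasurable

lemma integrable_gramKernel_integrand_prod [SFinite μ] (hK : StronglyMeasurable (uncurry K))
    (hK' : StronglyMeasurable (uncurry K')) (hP : AEStronglyMeasurable P ρ)
    (hKC : ∀ x t, ‖K x t‖ ≤ C) (hK'C : ∀ x t, ‖K' x t‖ ≤ C) (hPC : ∀ᵐ x ∂ρ, ‖P x‖ ≤ CP)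
    (hw : Integrable w μ) :
    Integrable (fun r : (α × α) × γ =>
      w r.1.1 ⬝ᵥ (((K r.2 r.1.1)ᵀ * P r.2 * K' r.2 r.1.2) *ᵥ w r.1.2)) ((μ.prod μ).prod ρ) := by
  have hKr : AEStronglyMeasurable (fun r : (α × α) × γ => K r.2 r.1.1) ((μ.prod μ).prod ρ) :=
    (hK.comp_measurable (measurable_snd.prodMk measurable_fst.fst)).aestronglyMeasurable
  have hK'r : AEStronglyMeasurable (fun r : (α × α) × γ => K' r.2 r.1.2) ((μ.prod μ).prod ρ) :=
    (hK'.comp_measurable (measurable_snd.prodMk measurable_fst.snd)).aestronglyMeasurable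
  refine integrable_dotProduct_mulVec_of_norm_le hw.1.comp_fst.comp_fst
    (hKr.transpose_mul_mul hP.comp_snd hK'r) hw.1.comp_snd.comp_fst
    (C := Fintype.card ι * (Fintype.card ι * (C * CP) * C)) ?_
    ((hw.norm.mul_prod hw.norm).comp_fst ρ)
  filter_upwards [Measure.quasiMeasurePreserving_snd.ae hPC] with r hr
  have hC : 0 ≤ C := (norm_nonneg _).trans (hKC r.2 r.1.1)
  have hCP : 0 ≤ CP := (norm_nonneg _).trans hr
  refine (norm_transpose_mul_mul_le _ _ _).trans ?_
  gcongr
  exacts [hKC _ _, hK'C _ _]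

lemma integrable_kernelQuadIntegrand_gramKernel [SFinite μ]
    (hK : StronglyMeasurable (uncurry K)) (hK' : StronglyMeasurable (uncurry K'))
    (hP : AEStronglyMeasurable P ρ) (hKC : ∀ x t, ‖K x t‖ ≤ C) (hK'C : ∀ x t, ‖K' x t‖ ≤ C)
    (hPC : ∀ᵐ x ∂ρ, ‖P x‖ ≤ CP) (hw : Integrable w μ) :
    Integrable (kernelQuadIntegrand (gramKernel ρ K P K') w) (μ.prod μ) :=
  (integrable_gramKernel_integrand_prod hK hK' hP hKC hK'C hPC hw).integral_prod_left.congr <|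
    .of_forall fun q => (kernelQuadIntegrand_gramKernel hK hK' hP hKC hK'C hPC q).symm

lemma kernelQuadForm_gramKernel [SFinite μ] (hK : StronglyMeasurable (uncurry K))
    (hK' : StronglyMeasurable (uncurry K')) (hP : AEStronglyMeasurable P ρ)
    (hKC : ∀ x t, ‖K x t‖ ≤ C) (hK'C : ∀ x t, ‖K' x t‖ ≤ C) (hPC : ∀ᵐ x ∂ρ, ‖P x‖ ≤ CP)
    (hw : Integrable w μ) :
    kernelQuadForm μ (gramKernel ρ K P K') w
      = ∫ x, integralOperator μ K w x ⬝ᵥ (P x *ᵥ integralOperator μ K' w x) ∂ρ := by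
  have hKw : ∀ K : γ → α → Matrix ι κ ℝ, StronglyMeasurable (uncurry K) →
      (∀ x t, ‖K x t‖ ≤ C) → ∀ x, Integrable (fun t => K x t *ᵥ w t) μ := fun K hK hKC x =>
    integrable_mulVec_of_norm_le
      (hK.comp_measurable (measurable_const.prodMk measurable_id)).aestronglyMeasurable
      (.of_forall (hKC x)) hw
  calc kernelQuadForm μ (gramKernel ρ K P K') w
      = ∫ t, ∫ s, ∫ x, w t ⬝ᵥ (((K x t)ᵀ * P x * K' x s) *ᵥ w s) ∂ρ ∂μ ∂μ :=
        integral_congr_ae <| .of_forall fun t => integral_congr_ae <| .of_forall fun s =>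
          kernelQuadIntegrand_gramKernel hK hK' hP hKC hK'C hPC (t, s)
    _ = ∫ x, ∫ t, ∫ s, w t ⬝ᵥ (((K x t)ᵀ * P x * K' x s) *ᵥ w s) ∂μ ∂μ ∂ρ :=
        integral_integral_integral_swap
          (integrable_gramKernel_integrand_prod hK hK' hP hKC hK'C hPC hw)
    _ = ∫ x, integralOperator μ K w x ⬝ᵥ (P x *ᵥ integralOperator μ K' w x) ∂ρ := by
        simp_rw [dotProduct_transpose_mul_mul_mulVec]
        exact integral_congr_ae <| .of_forall fun x =>
          integral_integral_dotProduct_mulVec _ (hKw K hK hKC x) (hKw K' hK' hK'C x)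

lemma gramKernel_prod {P : γ → γ → Matrix ι ι ℝ} (hK : StronglyMeasurable (uncurry K))
    (hP : AEStronglyMeasurable (uncurry P) (ρ.prod ρ)) (hKC : ∀ x t, ‖K x t‖ ≤ C)
    (hPC : ∀ᵐ x ∂ρ.prod ρ, ‖P x.1 x.2‖ ≤ CP) (t s : α) :
    gramKernel (ρ.prod ρ) (fun x => K x.1) (uncurry P) (fun x => K x.2) t s
      = ∫ τ, ∫ σ, (K τ t)ᵀ * P τ σ * K σ s ∂ρ ∂ρ := by
  refine integral_prod _ (integrable_transpose_mul_mul ?_ hP ?_ (.of_forall fun x => hKC x.1 t)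
    hPC (.of_forall fun x => hKC x.2 s))
  · exact (hK.comp_measurable (measurable_fst.prodMk measurable_const)).aestronglyMeasurable
  · exact (hK.comp_measurable (measurable_snd.prodMk measurable_const)).aestronglyMeasurable

lemma integrable_kernelQuadIntegrand_gramKernel_prod [SFinite μ] {P : γ → γ → Matrix ι ι ℝ}
    (hK : StronglyMeasurable (uncurry K)) (hP : AEStronglyMeasurable (uncurry P) (ρ.prod ρ))
    (hKC : ∀ x t, ‖K x t‖ ≤ C) (hPC : ∀ᵐ x ∂ρ.prod ρ, ‖P x.1 x.2‖ ≤ CP) (hw : Integrable w μ) :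
    Integrable (kernelQuadIntegrand
      (gramKernel (ρ.prod ρ) (fun x => K x.1) (uncurry P) (fun x => K x.2)) w) (μ.prod μ) :=
  integrable_kernelQuadIntegrand_gramKernel
    (hK.comp_measurable (measurable_fst.fst.prodMk measurable_snd))
    (hK.comp_measurable (measurable_fst.snd.prodMk measurable_snd)) hP (fun x => hKC x.1)
    (fun x => hKC x.2) hPC hw

lemma kernelQuadForm_gramKernel_prod [SFinite μ] {P : γ → γ → Matrix ι ι ℝ}
    (hK : StronglyMeasurable (uncurry K)) (hP : AEStronglyMeasurable (uncurry P) (ρ.prod ρ))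
    (hKC : ∀ x t, ‖K x t‖ ≤ C) (hPC : ∀ᵐ x ∂ρ.prod ρ, ‖P x.1 x.2‖ ≤ CP) (hw : Integrable w μ) :
    kernelQuadForm μ (gramKernel (ρ.prod ρ) (fun x => K x.1) (uncurry P) (fun x => K x.2)) w
      = kernelQuadForm ρ P (integralOperator μ K w) := by
  have hK₁ : StronglyMeasurable (uncurry fun x : γ × γ => K x.1) :=
    hK.comp_measurable (measurable_fst.fst.prodMk measurable_snd)
  have hK₂ : StronglyMeasurable (uncurry fun x : γ × γ => K x.2) :=
    hK.comp_measurable (measurable_fst.snd.prodMk measurable_snd)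
  rw [kernelQuadForm_gramKernel hK₁ hK₂ hP (fun x => hKC x.1) (fun x => hKC x.2) hPC hw]
  exact integral_prod _ (integrable_kernelQuadIntegrand_of_norm_le hP hPC
    (memLp_one_iff_integrable.1 (memLp_integralOperator hK hKC hw 1)))

end KernelQuadForm

lemma setIntegral_Ioc_indicator_Ici {E : Type*} [NormedAddCommGroup E] [NormedSpace ℝ E]
    {a b c : ℝ} (hac : a < c) (hcb : c ≤ b) (f : ℝ → E) :
    ∫ x in Set.Ioc a b, (Set.Ici c).indicator f x = ∫ x in c..b, f x := by
  have hinter : Set.Ici c ∩ Set.Ioc a b = Set.Icc c b := by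
    ext x; simp only [Set.mem_inter_iff, Set.mem_Ici, Set.mem_Ioc, Set.mem_Icc]; grind
  rw [MeasureTheory.integral_indicator measurableSet_Ici,
    Measure.restrict_restrict measurableSet_Ici, hinter, integral_Icc_eq_integral_Ioc, intervalIntegral.integral_of_le hcb]

section Volterra

variable {t0 t1 : ℝ} {E : Type*}

noncomputable def volterraKernel [Zero E] (t0 t1 : ℝ) (B : ℝ → ℝ → E) (σ t : ℝ) : E :=
  {q : ℝ × ℝ | t0 ≤ q.2 ∧ q.2 ≤ q.1 ∧ q.1 ≤ t1}.indicator (uncurry B) (σ, t)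

lemma volterraKernel_of_le [Zero E] (B : ℝ → ℝ → E) {σ t : ℝ} (ht : t0 ≤ t) (hσ : σ ≤ t1) :
    volterraKernel t0 t1 B σ t = (Set.Ici t).indicator (fun σ => B σ t) σ := by
  by_cases h : t ≤ σ <;> simp [volterraKernel, Set.indicator, h, ht, hσ]

lemma stronglyMeasurable_volterraKernel [Zero E] [TopologicalSpace E] {B : ℝ → ℝ → E}
    (hB : StronglyMeasurable (uncurry B)) :
    StronglyMeasurable (uncurry (volterraKernel t0 t1 B)) :=
  hB.indicator <| (measurableSet_le measurable_const measurable_snd).inter <|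
    (measurableSet_le measurable_snd measurable_fst).inter
      (measurableSet_le measurable_fst measurable_const)

lemma norm_volterraKernel_le [SeminormedAddGroup E] {B : ℝ → ℝ → E} {C : ℝ} (hC : 0 ≤ C)
    (hB : ∀ σ t, t0 ≤ t → t ≤ σ → σ ≤ t1 → ‖B σ t‖ ≤ C) (σ t : ℝ) :
    ‖volterraKernel t0 t1 B σ t‖ ≤ C := by
  simp only [volterraKernel, Set.indicator_apply]
  split_ifs with h
  exacts [hB σ t h.1 h.2.1 h.2.2, by simpa using hC]

end Volterra

section L11

variable {ι κ : Type*} [Fintype ι] [Fintype κ] {t0 t1 t s : ℝ}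

lemma gramKernel_volterraKernel (B : ℝ → ℝ → Matrix ι κ ℝ) (P : ℝ → Matrix ι ι ℝ)
    (ht : t ∈ Set.Ioc t0 t1) (hs : s ∈ Set.Ioc t0 t1) :
    gramKernel (volume.restrict (Set.Ioc t0 t1)) (volterraKernel t0 t1 B) P
        (volterraKernel t0 t1 B) t s
      = ∫ σ in (max t s)..t1, (B σ t)ᵀ * P σ * B σ s := by
  rw [← setIntegral_Ioc_indicator_Ici (lt_max_of_lt_left ht.1) (max_le ht.2 hs.2)]
  refine setIntegral_congr_fun measurableSet_Ioc fun σ hσ => ?_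
  rw [volterraKernel_of_le B ht.1.le hσ.2, volterraKernel_of_le B hs.1.le hσ.2]
  by_cases htσ : t ≤ σ <;> by_cases hsσ : s ≤ σ <;> simp [Set.indicator, htσ, hsσ]

lemma integral_integral_volterraKernel (B : ℝ → ℝ → Matrix ι κ ℝ) (P : ℝ → ℝ → Matrix ι ι ℝ)
    (ht : t ∈ Set.Ioc t0 t1) (hs : s ∈ Set.Ioc t0 t1) :
    ∫ τ in Set.Ioc t0 t1, ∫ σ in Set.Ioc t0 t1,
        (volterraKernel t0 t1 B τ t)ᵀ * P τ σ * volterraKernel t0 t1 B σ s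
      = ∫ τ in t..t1, ∫ σ in s..t1, (B τ t)ᵀ * P τ σ * B σ s := by
  rw [← setIntegral_Ioc_indicator_Ici ht.1 ht.2]
  refine setIntegral_congr_fun measurableSet_Ioc fun τ hτ => ?_
  rw [volterraKernel_of_le B ht.1.le hτ.2]
  by_cases htτ : t ≤ τ
  · simp only [Set.indicator_of_mem (Set.mem_Ici.2 htτ)]
    rw [← setIntegral_Ioc_indicator_Ici hs.1 hs.2]
    refine setIntegral_congr_fun measurableSet_Ioc fun σ hσ => ?_
    rw [volterraKernel_of_le B hs.1.le hσ.2]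
    by_cases hsσ : s ≤ σ <;> simp [Set.indicator, hsσ]
  · simp [Set.indicator, htτ]

noncomputable def l11Kernel (t1 : ℝ) (B1 : ℝ → ℝ → Matrix ι κ ℝ) (P0 : Matrix ι ι ℝ)
    (P1 : ℝ → Matrix ι ι ℝ) (P2 : ℝ → ℝ → Matrix ι ι ℝ) (Q2 : ℝ → ℝ → Matrix κ κ ℝ)
    (t s : ℝ) : Matrix κ κ ℝ :=
  (B1 t1 t)ᵀ * P0 * B1 t1 s
    + (∫ σ in (max t s)..t1, (B1 σ t)ᵀ * P1 σ * B1 σ s)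
    + (∫ τ in t..t1, ∫ σ in s..t1, (B1 τ t)ᵀ * P2 τ σ * B1 σ s)
    + Q2 t s

lemma l11Kernel_eq_gramKernel {B1 : ℝ → ℝ → Matrix ι κ ℝ} (P0 : Matrix ι ι ℝ)
    (P1 : ℝ → Matrix ι ι ℝ) {P2 : ℝ → ℝ → Matrix ι ι ℝ} (Q2 : ℝ → ℝ → Matrix κ κ ℝ)
    (hV : StronglyMeasurable (uncurry (volterraKernel t0 t1 B1))) {CB CP : ℝ}
    (hVC : ∀ σ t, ‖volterraKernel t0 t1 B1 σ t‖ ≤ CB)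
    (hP2 : AEStronglyMeasurable (uncurry P2)
      ((volume.restrict (Set.Ioc t0 t1)).prod (volume.restrict (Set.Ioc t0 t1))))
    (hP2C : ∀ᵐ x ∂(volume.restrict (Set.Ioc t0 t1)).prod (volume.restrict (Set.Ioc t0 t1)),
      ‖P2 x.1 x.2‖ ≤ CP)
    (ht : t ∈ Set.Ioc t0 t1) (hs : s ∈ Set.Ioc t0 t1) :
    l11Kernel t1 B1 P0 P1 P2 Q2 t s
      = gramKernel (Measure.dirac t1) (volterraKernel t0 t1 B1) (fun _ => P0)
            (volterraKernel t0 t1 B1) t s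
        + gramKernel (volume.restrict (Set.Ioc t0 t1)) (volterraKernel t0 t1 B1) P1
            (volterraKernel t0 t1 B1) t s
        + gramKernel ((volume.restrict (Set.Ioc t0 t1)).prod (volume.restrict (Set.Ioc t0 t1)))
            (fun x => volterraKernel t0 t1 B1 x.1) (uncurry P2)
            (fun x => volterraKernel t0 t1 B1 x.2) t s
        + Q2 t s := by
  have hV1 : ∀ u ∈ Set.Ioc t0 t1, volterraKernel t0 t1 B1 t1 u = B1 t1 u := fun u hu => by
    rw [volterraKernel_of_le B1 hu.1.le le_rfl, Set.indicator_of_mem (Set.mem_Ici.2 hu.2)]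
  rw [gramKernel_volterraKernel B1 P1 ht hs, gramKernel_prod hV hP2 hVC hP2C,
    integral_integral_volterraKernel B1 P2 ht hs, gramKernel, integral_dirac, hV1 t ht, hV1 s hs]
  rfl

lemma kernelQuadForm_l11Kernel {B1 : ℝ → ℝ → Matrix ι κ ℝ} (P0 : Matrix ι ι ℝ)
    {P1 : ℝ → Matrix ι ι ℝ} {P2 : ℝ → ℝ → Matrix ι ι ℝ} {Q2 : ℝ → ℝ → Matrix κ κ ℝ}
    {w : ℝ → κ → ℝ} (hV : StronglyMeasurable (uncurry (volterraKernel t0 t1 B1)))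
    {CB C1 C2 CQ : ℝ} (hVC : ∀ σ t, ‖volterraKernel t0 t1 B1 σ t‖ ≤ CB)
    (hP1 : AEStronglyMeasurable P1 (volume.restrict (Set.Ioc t0 t1)))
    (hP1C : ∀ᵐ σ ∂volume.restrict (Set.Ioc t0 t1), ‖P1 σ‖ ≤ C1)
    (hP2 : AEStronglyMeasurable (uncurry P2)
      ((volume.restrict (Set.Ioc t0 t1)).prod (volume.restrict (Set.Ioc t0 t1))))
    (hP2C : ∀ᵐ x ∂(volume.restrict (Set.Ioc t0 t1)).prod (volume.restrict (Set.Ioc t0 t1)),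
      ‖P2 x.1 x.2‖ ≤ C2)
    (hQ2 : AEStronglyMeasurable (uncurry Q2)
      ((volume.restrict (Set.Ioc t0 t1)).prod (volume.restrict (Set.Ioc t0 t1))))
    (hQ2C : ∀ᵐ x ∂(volume.restrict (Set.Ioc t0 t1)).prod (volume.restrict (Set.Ioc t0 t1)),
      ‖Q2 x.1 x.2‖ ≤ CQ)
    (hw : Integrable w (volume.restrict (Set.Ioc t0 t1))) :
    let z := integralOperator (volume.restrict (Set.Ioc t0 t1)) (volterraKernel t0 t1 B1) w
    kernelQuadForm (volume.restrict (Set.Ioc t0 t1)) (l11Kernel t1 B1 P0 P1 P2 Q2) w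
      = z t1 ⬝ᵥ (P0 *ᵥ z t1) + (∫ σ in Set.Ioc t0 t1, z σ ⬝ᵥ (P1 σ *ᵥ z σ))
        + kernelQuadForm (volume.restrict (Set.Ioc t0 t1)) P2 z
        + kernelQuadForm (volume.restrict (Set.Ioc t0 t1)) Q2 w := by
  intro z
  have hP0 : AEStronglyMeasurable (fun _ : ℝ => P0) (Measure.dirac t1) :=
    aestronglyMeasurable_const
  have hP0C : ∀ᵐ _ ∂Measure.dirac t1, ‖P0‖ ≤ ‖P0‖ := .of_forall fun _ => le_rfl
  have hI0 := integrable_kernelQuadIntegrand_gramKernel hV hV hP0 hVC hVC hP0C hw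
  have hI1 := integrable_kernelQuadIntegrand_gramKernel hV hV hP1 hVC hVC hP1C hw
  have hI2 := integrable_kernelQuadIntegrand_gramKernel_prod hV hP2 hVC hP2C hw
  have hIQ := integrable_kernelQuadIntegrand_of_norm_le hQ2 hQ2C hw
  rw [kernelQuadForm_restrict_congr measurableSet_Ioc w fun t ht s hs =>
      l11Kernel_eq_gramKernel P0 P1 Q2 hV hVC hP2 hP2C ht hs,
    kernelQuadForm_add ((hI0.kernelQuadIntegrand_add hI1).kernelQuadIntegrand_add hI2) hIQ,
    kernelQuadForm_add (hI0.kernelQuadIntegrand_add hI1) hI2, kernelQuadForm_add hI0 hI1,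
    kernelQuadForm_gramKernel hV hV hP0 hVC hVC hP0C hw, integral_dirac,
    kernelQuadForm_gramKernel hV hV hP1 hVC hVC hP1C hw,
    kernelQuadForm_gramKernel_prod hV hP2 hVC hP2C hw]

lemma exists_norm_volterraKernel_le {B : ℝ → ℝ → Matrix ι κ ℝ}
    (h : ∃ M, ∀ t s, t0 ≤ s → s ≤ t → t ≤ t1 → ∀ i j, |B t s i j| ≤ M) :
    ∃ C, ∀ σ t, ‖volterraKernel t0 t1 B σ t‖ ≤ C := by
  obtain ⟨M, hM⟩ := h
  exact ⟨max M 0, norm_volterraKernel_le (le_max_right _ _) fun σ t h1 h2 h3 =>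
    norm_le_max_of_abs_le (hM σ t h1 h2 h3)⟩

lemma exists_ae_restrict_norm_le {P : ℝ → Matrix ι κ ℝ}
    (h : ∃ M, ∀ t ∈ Set.Icc t0 t1, ∀ i j, |P t i j| ≤ M) :
    ∃ C, ∀ᵐ t ∂volume.restrict (Set.Ioc t0 t1), ‖P t‖ ≤ C := by
  obtain ⟨M, hM⟩ := h
  exact ⟨max M 0, (ae_restrict_mem measurableSet_Ioc).mono fun t ht =>
    norm_le_max_of_abs_le (hM t (Set.Ioc_subset_Icc_self ht))⟩

lemma exists_ae_restrict_prod_norm_le {P : ℝ → ℝ → Matrix ι κ ℝ}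
    (h : ∃ M, ∀ t ∈ Set.Icc t0 t1, ∀ s ∈ Set.Icc t0 t1, ∀ i j, |P t s i j| ≤ M) :
    ∃ C, ∀ᵐ x ∂(volume.restrict (Set.Ioc t0 t1)).prod (volume.restrict (Set.Ioc t0 t1)),
      ‖P x.1 x.2‖ ≤ C := by
  obtain ⟨M, hM⟩ := h
  have hmem : ∀ᵐ t ∂volume.restrict (Set.Ioc t0 t1), t ∈ Set.Icc t0 t1 :=
    (ae_restrict_mem measurableSet_Ioc).mono fun _ ht => Set.Ioc_subset_Icc_self ht
  refine ⟨max M 0, ?_⟩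
  filter_upwards [Measure.quasiMeasurePreserving_fst.ae hmem,
    Measure.quasiMeasurePreserving_snd.ae hmem] with x h1 h2
  exact norm_le_max_of_abs_le (hM _ h1 _ h2)

end L11

theorem L11_kernel_nonneg_general
    (p m : ℕ) (t0 t1 : ℝ)
    (B1 : ℝ → ℝ → Matrix (Fin p) (Fin m) ℝ)
    (P0 : Matrix (Fin p) (Fin p) ℝ)
    (P1 : ℝ → Matrix (Fin p) (Fin p) ℝ)
    (P2 : ℝ → ℝ → Matrix (Fin p) (Fin p) ℝ)
    (Q2 : ℝ → ℝ → Matrix (Fin m) (Fin m) ℝ)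
    -- B₁ bounded measurable on Δ
    (hB1meas : ∀ i j, Measurable fun q : ℝ × ℝ => B1 q.1 q.2 i j)
    (hB1bdd : ∃ M, ∀ t s, t0 ≤ s → s ≤ t → t ≤ t1 → ∀ i j, |B1 t s i j| ≤ M)
    -- P₀ symmetric positive semidefinite
    (hP0 : ∀ z : Fin p → ℝ, 0 ≤ z ⬝ᵥ (P0 *ᵥ z))
    -- P₁ bounded measurable, symmetric positive semidefinite a.e.
    (hP1meas : ∀ i j, Measurable fun t => P1 t i j)
    (hP1bdd : ∃ M, ∀ t ∈ Set.Icc t0 t1, ∀ i j, |P1 t i j| ≤ M)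
    (hP1 : ∀ᵐ t ∂(volume.restrict (Set.Ioc t0 t1)),
      (P1 t)ᵀ = P1 t ∧ ∀ z : Fin p → ℝ, 0 ≤ z ⬝ᵥ (P1 t *ᵥ z))
    -- P₂ bounded measurable, symmetric, with nonnegative integral quadratic form
    (hP2meas : ∀ i j, Measurable fun q : ℝ × ℝ => P2 q.1 q.2 i j)
    (hP2bdd : ∃ M, ∀ t ∈ Set.Icc t0 t1, ∀ s ∈ Set.Icc t0 t1, ∀ i j, |P2 t s i j| ≤ M)
    (hP2 : ∀ z : ℝ → Fin p → ℝ, MemLp z 2 (volume.restrict (Set.Ioc t0 t1)) →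
      0 ≤ ∫ t in Set.Ioc t0 t1, ∫ s in Set.Ioc t0 t1, z t ⬝ᵥ (P2 t s *ᵥ z s))
    -- Q₂ bounded measurable, symmetric, with nonnegative integral quadratic form
    (hQ2meas : ∀ i j, Measurable fun q : ℝ × ℝ => Q2 q.1 q.2 i j)
    (hQ2bdd : ∃ M, ∀ t ∈ Set.Icc t0 t1, ∀ s ∈ Set.Icc t0 t1, ∀ i j, |Q2 t s i j| ≤ M)
    (hQ2 : ∀ w : ℝ → Fin m → ℝ, MemLp w 2 (volume.restrict (Set.Ioc t0 t1)) →
      0 ≤ ∫ t in Set.Ioc t0 t1, ∫ s in Set.Ioc t0 t1, w t ⬝ᵥ (Q2 t s *ᵥ w s)) :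
    ∀ w : ℝ → Fin m → ℝ, MemLp w 2 (volume.restrict (Set.Ioc t0 t1)) →
      0 ≤ ∫ t in Set.Ioc t0 t1, ∫ s in Set.Ioc t0 t1,
        w t ⬝ᵥ (((B1 t1 t)ᵀ * P0 * B1 t1 s
          + (∫ σ in (max t s)..t1, (B1 σ t)ᵀ * P1 σ * B1 σ s)
          + (∫ τ in t..t1, ∫ σ in s..t1, (B1 τ t)ᵀ * P2 τ σ * B1 σ s)
          + Q2 t s) *ᵥ w s) := by
  intro w hw
  have hw1 : Integrable w (volume.restrict (Set.Ioc t0 t1)) := hw.integrable one_le_two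
  have hV := stronglyMeasurable_volterraKernel (t0 := t0) (t1 := t1)
    (stronglyMeasurable_of_measurable_apply hB1meas)
  obtain ⟨CB, hVC⟩ := exists_norm_volterraKernel_le hB1bdd
  obtain ⟨C1, hP1C⟩ := exists_ae_restrict_norm_le hP1bdd
  obtain ⟨C2, hP2C⟩ := exists_ae_restrict_prod_norm_le hP2bdd
  obtain ⟨CQ, hQ2C⟩ := exists_ae_restrict_prod_norm_le hQ2bdd
  change 0 ≤ kernelQuadForm _ (l11Kernel t1 B1 P0 P1 P2 Q2) w
  rw [kernelQuadForm_l11Kernel P0 hV hVC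
    (stronglyMeasurable_of_measurable_apply hP1meas).aestronglyMeasurable hP1C
    (stronglyMeasurable_of_measurable_apply hP2meas).aestronglyMeasurable hP2C
    (stronglyMeasurable_of_measurable_apply hQ2meas).aestronglyMeasurable hQ2C hw1]
  refine add_nonneg (add_nonneg (add_nonneg (hP0 _) ?_)
    (hP2 _ (memLp_integralOperator hV hVC hw1 2))) (hQ2 w hw)
  exact integral_nonneg_of_ae (hP1.mono fun σ hσ => hσ.2 _)

/-- **Nonnegativity of the kernel `L₁₁` of (4.6)**: if `P₀`, `P₁`, `P₂` and `Q₂` are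
(semi)definite as indicated, then `∫∫ w(t)ᵀL₁₁(t,s)w(s) ds dt ≥ 0` for every
`w ∈ L²(t₀,t₁;ℝᵐ)`. -/
theorem L11_kernel_nonneg
    (p m : ℕ) (t0 t1 : ℝ) (ht : t0 < t1)
    (B1 : ℝ → ℝ → Matrix (Fin p) (Fin m) ℝ)
    (P0 : Matrix (Fin p) (Fin p) ℝ)
    (P1 : ℝ → Matrix (Fin p) (Fin p) ℝ)
    (P2 : ℝ → ℝ → Matrix (Fin p) (Fin p) ℝ)
    (Q2 : ℝ → ℝ → Matrix (Fin m) (Fin m) ℝ)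
    -- B₁ bounded measurable on Δ
    (hB1meas : ∀ i j, Measurable fun q : ℝ × ℝ => B1 q.1 q.2 i j)
    (hB1bdd : ∃ M, ∀ t s, t0 ≤ s → s ≤ t → t ≤ t1 → ∀ i j, |B1 t s i j| ≤ M)
    -- P₀ symmetric positive semidefinite
    (hP0sym : P0ᵀ = P0)
    (hP0 : ∀ z : Fin p → ℝ, 0 ≤ z ⬝ᵥ (P0 *ᵥ z))
    -- P₁ bounded measurable, symmetric positive semidefinite a.e.
    (hP1meas : ∀ i j, Measurable fun t => P1 t i j)
    (hP1bdd : ∃ M, ∀ t ∈ Set.Icc t0 t1, ∀ i j, |P1 t i j| ≤ M)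
    (hP1 : ∀ᵐ t ∂(volume.restrict (Set.Ioc t0 t1)),
      (P1 t)ᵀ = P1 t ∧ ∀ z : Fin p → ℝ, 0 ≤ z ⬝ᵥ (P1 t *ᵥ z))
    -- P₂ bounded measurable, symmetric, with nonnegative integral quadratic form
    (hP2meas : ∀ i j, Measurable fun q : ℝ × ℝ => P2 q.1 q.2 i j)
    (hP2bdd : ∃ M, ∀ t ∈ Set.Icc t0 t1, ∀ s ∈ Set.Icc t0 t1, ∀ i j, |P2 t s i j| ≤ M)
    (hP2sym : ∀ t s, (P2 t s)ᵀ = P2 s t)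
    (hP2 : ∀ z : ℝ → Fin p → ℝ, MemLp z 2 (volume.restrict (Set.Ioc t0 t1)) →
      0 ≤ ∫ t in Set.Ioc t0 t1, ∫ s in Set.Ioc t0 t1, z t ⬝ᵥ (P2 t s *ᵥ z s))
    -- Q₂ bounded measurable, symmetric, with nonnegative integral quadratic form
    (hQ2meas : ∀ i j, Measurable fun q : ℝ × ℝ => Q2 q.1 q.2 i j)
    (hQ2bdd : ∃ M, ∀ t ∈ Set.Icc t0 t1, ∀ s ∈ Set.Icc t0 t1, ∀ i j, |Q2 t s i j| ≤ M)
    (hQ2sym : ∀ t s, (Q2 t s)ᵀ = Q2 s t)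
    (hQ2 : ∀ w : ℝ → Fin m → ℝ, MemLp w 2 (volume.restrict (Set.Ioc t0 t1)) →
      0 ≤ ∫ t in Set.Ioc t0 t1, ∫ s in Set.Ioc t0 t1, w t ⬝ᵥ (Q2 t s *ᵥ w s)) :
    ∀ w : ℝ → Fin m → ℝ, MemLp w 2 (volume.restrict (Set.Ioc t0 t1)) →
      0 ≤ ∫ t in Set.Ioc t0 t1, ∫ s in Set.Ioc t0 t1,
        w t ⬝ᵥ (((B1 t1 t)ᵀ * P0 * B1 t1 s
          + (∫ σ in (max t s)..t1, (B1 σ t)ᵀ * P1 σ * B1 σ s)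
          + (∫ τ in t..t1, ∫ σ in s..t1, (B1 τ t)ᵀ * P2 τ σ * B1 σ s)
          + Q2 t s) *ᵥ w s) :=
  L11_kernel_nonneg_general p m t0 t1 B1 P0 P1 P2 Q2 hB1meas hB1bdd hP0 hP1meas hP1bdd hP1 hP2meas
    hP2bdd hP2 hQ2meas hQ2bdd hQ2
end
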